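/- arXiv:2012.15787 — 2 statements merged into one kernel-verified Lean document; each statement's English description precedes it below -/
import Mathlib

section
/- Let P be a slant irreducible finite Γ-colored d-complete poset with top tree T, and assume Γ is simply laced and T contains more than one element. Then T has shape Y(i;j,k) for some integers i ≥ 1 and k ≥ j ≥ 1: there exist an element s ∈ T and subsets C₁, C₂ of T such that (1) the set {t ∈ T : t ≥ s} is a chain with i elements whose minimum is s; (2) s covers exactly two elements of T, and these are the maxima of C₁ and C₂ respectively; (3) C₁ and C₂ are disjoint saturated chains in T with |C₁| = j and |C₂| = k, every element of C₁ is incomparable to every element of C₂, and T = {t ∈ T : t ≥ s} ∪ C₁ ∪ C₂. -/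
/-!
Common definitions: Dynkin diagram data, Γ-colored posets, and the coloring
properties EC, NA, AC, ICE2, UCB1, LCB1 from the paper, together with
Γ-colored d-complete and Γ-colored minuscule posets, top trees, slant
irreducibility, extensions, lower frontier censuses, and full heaps.
-/

universe u v w

variable {Γ : Type u} {P : Type v}

/-- The integers `θ a b` form a Dynkin diagram datum. -/
def DynkinDatum (θ : Γ → Γ → ℤ) : Prop :=
  (∀ a : Γ, θ a a = 2) ∧ (∀ a b : Γ, a ≠ b → θ a b ≤ 0) ∧
    (∀ a b : Γ, a ≠ b → (θ a b = 0 ↔ θ b a = 0))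

/-- Colors `a` and `b` are adjacent. -/
def AdjColor (θ : Γ → Γ → ℤ) (a b : Γ) : Prop := θ a b < 0

/-- The Dynkin diagram is simply laced. -/
def SimplyLaced (θ : Γ → Γ → ℤ) : Prop :=
  ∀ a b : Γ, a ≠ b → θ a b = 0 ∨ θ a b = -1

/-- All closed intervals are finite. -/
def LocallyFinitePoset (α : Type*) [PartialOrder α] : Prop :=
  ∀ x y : α, (Set.Icc x y).Finite

/-- A poset is connected if it cannot be written as a disjoint union of two nonempty
subposets with no comparabilities between them. -/
def ConnectedPoset (α : Type*) [PartialOrder α] : Prop :=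
  ∀ S : Set α, S.Nonempty → Sᶜ.Nonempty → ∃ x ∈ S, ∃ y ∈ Sᶜ, x ≤ y ∨ y ≤ x

section
variable [PartialOrder P]

/-- (EC) Elements with equal colors are comparable. -/
def ColoredEC (κ : P → Γ) : Prop := ∀ x y : P, κ x = κ y → x ≤ y ∨ y ≤ x

/-- (NA) Neighbors have adjacent colors. -/
def ColoredNA (θ : Γ → Γ → ℤ) (κ : P → Γ) : Prop :=
  ∀ x y : P, x ⋖ y → AdjColor θ (κ x) (κ y)

/-- (AC) Elements with adjacent colors are comparable. -/
def ColoredAC (θ : Γ → Γ → ℤ) (κ : P → Γ) : Prop :=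
  ∀ x y : P, AdjColor θ (κ x) (κ y) → x ≤ y ∨ y ≤ x

/-- (ICE2) Between consecutive elements of a color `a`, the census of colors
adjacent to `a` is two. -/
def ColoredICE2 (θ : Γ → Γ → ℤ) (κ : P → Γ) : Prop :=
  ∀ (a : Γ) (x y : P), κ x = a → κ y = a → x < y → (∀ z ∈ Set.Ioo x y, κ z ≠ a) →
    (∑ᶠ z ∈ Set.Ioo x y, -θ (κ z) a) = 2

/-- `U(x,P)`: elements above `x` with color adjacent to that of `x`. -/
def USet (θ : Γ → Γ → ℤ) (κ : P → Γ) (x : P) : Set P :=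
  {y : P | x < y ∧ AdjColor θ (κ y) (κ x)}

/-- `L(x,P)`: elements below `x` with color adjacent to that of `x`. -/
def LSet (θ : Γ → Γ → ℤ) (κ : P → Γ) (x : P) : Set P :=
  {y : P | y < x ∧ AdjColor θ (κ y) (κ x)}

/-- (UCB1) Upper frontier census bound. -/
def ColoredUCB1 (θ : Γ → Γ → ℤ) (κ : P → Γ) : Prop :=
  ∀ x : P, (∀ y : P, κ y = κ x → ¬x < y) →
    (USet θ κ x).Finite ∧ (∑ᶠ y ∈ USet θ κ x, -θ (κ y) (κ x)) ≤ 1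

/-- (LCB1) Lower frontier census bound. -/
def ColoredLCB1 (θ : Γ → Γ → ℤ) (κ : P → Γ) : Prop :=
  ∀ x : P, (∀ y : P, κ y = κ x → ¬y < x) →
    (LSet θ κ x).Finite ∧ (∑ᶠ y ∈ LSet θ κ x, -θ (κ y) (κ x)) ≤ 1

/-- A Γ-colored d-complete poset: locally finite, surjectively colored, and
satisfying EC, NA, AC, ICE2, and UCB1. -/
def GColoredDComplete (θ : Γ → Γ → ℤ) (κ : P → Γ) : Prop :=
  LocallyFinitePoset P ∧ Function.Surjective κ ∧ ColoredEC κ ∧ ColoredNA θ κ ∧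
    ColoredAC θ κ ∧ ColoredICE2 θ κ ∧ ColoredUCB1 θ κ

/-- A Γ-colored minuscule poset: Γ-colored d-complete and LCB1. -/
def GColoredMinuscule (θ : Γ → Γ → ℤ) (κ : P → Γ) : Prop :=
  GColoredDComplete θ κ ∧ ColoredLCB1 θ κ

/-- The top tree: the set of elements maximal in their color class. -/
def TopTree (κ : P → Γ) : Set P := {x : P | ∀ y : P, κ y = κ x → ¬x < y}

/-- `x` is covered by `y` within the subposet `S`. -/
def CoversIn (S : Set P) (x y : P) : Prop :=
  x ∈ S ∧ y ∈ S ∧ x < y ∧ ∀ z ∈ S, x < z → ¬z < y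

/-- Slant irreducibility of a Γ-colored d-complete poset. -/
def SlantIrreducible (κ : P → Γ) : Prop :=
  ConnectedPoset P ∧ ∀ x y : P, CoversIn (TopTree κ) x y → ∃ z : P, z ≠ y ∧ κ z = κ y

/-- A saturated chain in a subposet `S`: a chain that is convex in `S`. -/
def SaturatedChainIn (S C : Set P) : Prop :=
  C ⊆ S ∧ IsChain (· ≤ ·) C ∧ ∀ x ∈ C, ∀ y ∈ C, ∀ z ∈ S, x < z → z < y → z ∈ C

/-- The lower frontier census at the element `y`. -/
noncomputable def LCensus (θ : Γ → Γ → ℤ) (κ : P → Γ) (y : P) : ℤ :=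
  ∑ᶠ x ∈ LSet θ κ y, -θ (κ x) (κ y)

/-- A full heap: locally finite, surjectively colored, EC, NA, AC, ICE2, and every
color class order-isomorphic to ℤ. -/
def FullHeap (θ : Γ → Γ → ℤ) (κ : P → Γ) : Prop :=
  LocallyFinitePoset P ∧ Function.Surjective κ ∧ ColoredEC κ ∧ ColoredNA θ κ ∧
    ColoredAC θ κ ∧ ColoredICE2 θ κ ∧ ∀ a : Γ, Nonempty ({x : P // κ x = a} ≃o ℤ)

end

/-- `ι` realizes the colored poset `A` as an order filter of the colored poset `B`. -/
def FilterEmbedding {G : Type*} {A B : Type*} [PartialOrder A] [PartialOrder B]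
    (κ : A → G) (κ' : B → G) (ι : A → B) : Prop :=
  (∀ p q : A, ι p ≤ ι q ↔ p ≤ q) ∧ (∀ p : A, κ' (ι p) = κ p) ∧ IsUpperSet (Set.range ι)

/-- `B` is an extension of `A` by the color `a`, with extending element `x`. -/
def IsExtensionBy {G : Type*} {A B : Type*} [PartialOrder A] [PartialOrder B]
    (θ : G → G → ℤ) (κ : A → G) (κ' : B → G) (a : G) (ι : A → B) (x : B) : Prop :=
  Finite B ∧ GColoredDComplete θ κ' ∧ ConnectedPoset B ∧
    FilterEmbedding κ κ' ι ∧ (Set.range ι)ᶜ = {x} ∧ κ' x = a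

/-!
By UCB1 for a simply laced `Γ`, an element `x` of the top tree `T` has at most one element above
it of color adjacent to `κ x`. Covers have adjacent colors, so `x` has a unique upper cover, which
again lies in `T`; hence the up-set of `x` is a chain, and by connectedness `T` is a rooted tree.

A node `t` of `T` with a child has, by slant irreducibility, a color predecessor `t'`, and by ICE2
exactly two elements of `(t', t)` have color adjacent to `κ t`. The children of `t` are among
them, so `T` branches at most binarily. Below a branch node, the color predecessor of every node
lies strictly below that of its parent; the parent's predecessor then occupies one of the two
places in the interval of the node, which therefore has at most one child. Without any branch
node the inequality is reversed all the way down to a minimal element `m` of `T`; but an element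
of `(m', m)` of color adjacent to `κ m` must have the color of the parent `u` of `m`, and so lies
below `u' < m'`. So `T` has exactly one branch node `s`, with exactly two children, and below
each of them `T` is a chain.
-/

open Set

section Dynkin

variable {θ : Γ → Γ → ℤ}

theorem DynkinDatum.ne_of_adjColor (hθ : DynkinDatum θ) {a b : Γ} (h : AdjColor θ a b) :
    a ≠ b := by
  rintro rfl
  have := hθ.1 a
  unfold AdjColor at h
  omega

theorem DynkinDatum.adjColor_symm (hθ : DynkinDatum θ) {a b : Γ} (h : AdjColor θ a b) :
    AdjColor θ b a := by
  have hab := hθ.ne_of_adjColor h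
  have hba := hθ.2.1 b a hab.symm
  have hnz := hθ.2.2 a b hab
  unfold AdjColor at h ⊢
  omega

theorem finsum_mem_ite_one {α : Type*} {s : Set α} (hs : s.Finite) (p : α → Prop)
    [DecidablePred p] : ∑ᶠ z ∈ s, (if p z then (1 : ℤ) else 0) = ({z ∈ s | p z}.ncard : ℤ) := by
  rw [← finsum_one, Nat.cast_finsum_mem (hs.subset (sep_subset _ _)),
    finsum_mem_inter_support_eq _ s {z ∈ s | p z}]
  · exact finsum_mem_congr rfl fun z (hz : z ∈ s ∧ p z) => by simp [hz.2]
  · ext z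
    by_cases h : p z <;> simp [h]

theorem SimplyLaced.finsum_mem_neg_eq_ncard (hsl : SimplyLaced θ) {κ : P → Γ} {s : Set P}
    (hs : s.Finite) {a : Γ} (hne : ∀ z ∈ s, κ z ≠ a) :
    ∑ᶠ z ∈ s, -θ (κ z) a = ({z ∈ s | AdjColor θ (κ z) a}.ncard : ℤ) := by
  classical
  have hterm : ∀ z ∈ s, -θ (κ z) a = if AdjColor θ (κ z) a then 1 else 0 := by
    intro z hz
    unfold AdjColor
    rcases hsl _ _ (hne z hz) with h | h <;> simp [h]
  rw [finsum_mem_congr rfl hterm, finsum_mem_ite_one hs]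

end Dynkin

theorem ConnectedPoset.eq_univ_of_covBy_closed {α : Type*} [PartialOrder α]
    (hc : ConnectedPoset α) (hlf : LocallyFinitePoset α) {S : Set α} (hS : S.Nonempty)
    (hcov : ∀ a b, a ⋖ b → (a ∈ S ↔ b ∈ S)) : S = univ := by
  let := LocallyFiniteOrder.ofFiniteIcc hlf
  have hup : Monotone (· ∈ S) :=
    (monotone_iff_forall_covBy _).2 fun a b hab => (hcov a b hab).1
  have hdown : Monotone (· ∈ Sᶜ) :=
    (monotone_iff_forall_covBy _).2 fun a b hab => mt (hcov a b hab).2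
  by_contra hne
  obtain ⟨x, hx, y, hy, hxy | hyx⟩ := hc S hS (nonempty_compl.2 hne)
  · exact hy (hup hxy hx)
  · exact hdown hyx hy hx

section ColoredPoset

variable [PartialOrder P] {θ : Γ → Γ → ℤ} {κ : P → Γ}

theorem GColoredDComplete.coloredEC (hdc : GColoredDComplete θ κ) : ColoredEC κ := hdc.2.2.1

theorem GColoredDComplete.coloredNA (hdc : GColoredDComplete θ κ) : ColoredNA θ κ := hdc.2.2.2.1

theorem GColoredDComplete.coloredAC (hdc : GColoredDComplete θ κ) : ColoredAC θ κ :=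
  hdc.2.2.2.2.1

theorem GColoredDComplete.coloredICE2 (hdc : GColoredDComplete θ κ) : ColoredICE2 θ κ :=
  hdc.2.2.2.2.2.1

theorem GColoredDComplete.coloredUCB1 (hdc : GColoredDComplete θ κ) : ColoredUCB1 θ κ :=
  hdc.2.2.2.2.2.2

theorem mem_topTree_of_forall_le {t : P} (h : ∀ z, κ z = κ t → z ≤ t) : t ∈ TopTree κ :=
  fun y hy hty => hty.not_ge (h y hy)

theorem ColoredEC.le_of_mem_topTree (hec : ColoredEC κ) {t z : P} (ht : t ∈ TopTree κ)
    (hz : κ z = κ t) : z ≤ t := by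
  rcases hec z t hz with h | h
  · exact h
  · exact (h.eq_of_not_lt (ht z hz)).ge

theorem ColoredEC.eq_of_mem_topTree (hec : ColoredEC κ) {x y : P} (hx : x ∈ TopTree κ)
    (hy : y ∈ TopTree κ) (h : κ x = κ y) : x = y :=
  le_antisymm (hec.le_of_mem_topTree hy h) (hec.le_of_mem_topTree hx h.symm)

theorem exists_mem_topTree_color_eq [Finite P] (x : P) : ∃ t ∈ TopTree κ, κ t = κ x := by
  obtain ⟨t, ht⟩ := (toFinite {z | κ z = κ x}).exists_maximal ⟨x, rfl⟩
  exact ⟨t, fun y hy hty => hty.not_ge (ht.2 (hy.trans ht.1) hty.le), ht.1⟩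

structure IsColorPred (κ : P → Γ) (t' t : P) : Prop where
  color_eq : κ t' = κ t
  lt : t' < t
  le_of_lt : ∀ z, κ z = κ t → z < t → z ≤ t'

theorem IsColorPred.unique {t₁ t₂ t : P} (h₁ : IsColorPred κ t₁ t) (h₂ : IsColorPred κ t₂ t) :
    t₁ = t₂ :=
  le_antisymm (h₂.le_of_lt _ h₁.color_eq h₁.lt) (h₁.le_of_lt _ h₂.color_eq h₂.lt)

theorem IsColorPred.notMem_topTree {t' t : P} (h : IsColorPred κ t' t) : t' ∉ TopTree κ :=
  fun ht' => ht' t h.color_eq.symm h.lt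

theorem ColoredEC.exists_isColorPred [Finite P] (hec : ColoredEC κ) {z t : P} (hz : κ z = κ t)
    (hzt : z < t) : ∃ t', IsColorPred κ t' t := by
  obtain ⟨t', ht'⟩ := (toFinite {y | κ y = κ t ∧ y < t}).exists_maximal ⟨z, hz, hzt⟩
  refine ⟨t', ht'.1.1, ht'.1.2, fun y hy hyt => ?_⟩
  rcases hec y t' (hy.trans ht'.1.1.symm) with h | h
  · exact h
  · exact ht'.2 ⟨hy, hyt⟩ h

def adjIoo (θ : Γ → Γ → ℤ) (κ : P → Γ) (x y : P) : Set P :=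
  {z ∈ Ioo x y | AdjColor θ (κ z) (κ y)}

theorem IsColorPred.ncard_adjIoo [Finite P] (hsl : SimplyLaced θ) (hice : ColoredICE2 θ κ)
    {t' t : P} (h : IsColorPred κ t' t) : (adjIoo θ κ t' t).ncard = 2 := by
  have hcons : ∀ z ∈ Ioo t' t, κ z ≠ κ t := fun z hz hzt => (h.le_of_lt z hzt hz.2).not_gt hz.1
  have := hice (κ t) t' t h.color_eq rfl h.lt hcons
  rw [hsl.finsum_mem_neg_eq_ncard (toFinite _) hcons] at this
  exact_mod_cast this

theorem IsColorPred.eq_or_eq_of_mem_adjIoo [Finite P] (hsl : SimplyLaced θ)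
    (hice : ColoredICE2 θ κ) {t' t : P} (h : IsColorPred κ t' t) {a b z : P}
    (ha : a ∈ adjIoo θ κ t' t) (hb : b ∈ adjIoo θ κ t' t) (hz : z ∈ adjIoo θ κ t' t)
    (hab : a ≠ b) : z = a ∨ z = b := by
  have hpair : {a, b} = adjIoo θ κ t' t := eq_of_subset_of_ncard_le (pair_subset ha hb)
    (by rw [h.ncard_adjIoo hsl hice, ncard_pair hab]) (toFinite _)
  rw [← hpair] at hz
  exact hz

theorem ColoredUCB1.subsingleton_uSet (hsl : SimplyLaced θ) (hucb : ColoredUCB1 θ κ) {x : P}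
    (hx : x ∈ TopTree κ) : (USet θ κ x).Subsingleton := by
  obtain ⟨hfin, hsum⟩ := hucb x hx
  rw [hsl.finsum_mem_neg_eq_ncard hfin fun y hy h => hx y h hy.1,
    sep_eq_self_iff_mem_true.2 fun y hy => hy.2] at hsum
  have := hfin.to_subtype
  exact ncard_le_one_iff_subsingleton.1 (by exact_mod_cast hsum)

theorem CovBy.mem_uSet (hθ : DynkinDatum θ) (hna : ColoredNA θ κ) {x u : P} (h : x ⋖ u) :
    u ∈ USet θ κ x :=
  ⟨h.lt, hθ.adjColor_symm (hna x u h)⟩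

end ColoredPoset

section TopTreeStructure

variable [PartialOrder P] [Finite P] {θ : Γ → Γ → ℤ} {κ : P → Γ}

theorem CovBy.le_of_lt_of_mem_topTree (hθ : DynkinDatum θ) (hsl : SimplyLaced θ)
    (hdc : GColoredDComplete θ κ) {x u y : P} (hx : x ∈ TopTree κ) (hxu : x ⋖ u)
    (hxy : x < y) : u ≤ y := by
  obtain ⟨m, hxm, hmy⟩ := exists_covBy_le_of_lt hxy
  rwa [hdc.coloredUCB1.subsingleton_uSet hsl hx (hxu.mem_uSet hθ hdc.coloredNA)
    (hxm.mem_uSet hθ hdc.coloredNA)]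

theorem covBy_of_lt_of_adjColor (hθ : DynkinDatum θ) (hsl : SimplyLaced θ)
    (hdc : GColoredDComplete θ κ) {x y : P} (hx : x ∈ TopTree κ) (hxy : x < y)
    (hadj : AdjColor θ (κ y) (κ x)) : x ⋖ y := by
  obtain ⟨m, hxm, -⟩ := exists_covBy_le_of_lt hxy
  rwa [hdc.coloredUCB1.subsingleton_uSet hsl hx (hxm.mem_uSet hθ hdc.coloredNA) ⟨hxy, hadj⟩]
    at hxm

theorem CovBy.mem_topTree (hθ : DynkinDatum θ) (hsl : SimplyLaced θ)
    (hdc : GColoredDComplete θ κ) {x u : P} (hx : x ∈ TopTree κ) (hxu : x ⋖ u) :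
    u ∈ TopTree κ := by
  obtain ⟨t, ht, htu⟩ := exists_mem_topTree_color_eq (κ := κ) u
  have hut : u ≤ t := hdc.coloredEC.le_of_mem_topTree ht htu.symm
  have hu := hxu.mem_uSet hθ hdc.coloredNA
  rwa [hdc.coloredUCB1.subsingleton_uSet hsl hx hu ⟨hxu.lt.trans_le hut, htu ▸ hu.2⟩]

theorem isChain_Ici_of_mem_topTree (hθ : DynkinDatum θ) (hsl : SimplyLaced θ)
    (hdc : GColoredDComplete θ κ) {x : P} (hx : x ∈ TopTree κ) :
    IsChain (· ≤ ·) (Ici x) := by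
  induction x using WellFoundedGT.induction with
  | _ x ih =>
  intro y hy z hz _
  rcases (mem_Ici.1 hy).eq_or_lt with rfl | hxy
  · exact Or.inl hz
  rcases (mem_Ici.1 hz).eq_or_lt with rfl | hxz
  · exact Or.inr hy
  obtain ⟨u, hxu, -⟩ := exists_covBy_le_of_lt hxy
  exact (ih u hxu.lt (hxu.mem_topTree hθ hsl hdc hx)).total
    (hxu.le_of_lt_of_mem_topTree hθ hsl hdc hx hxy) (hxu.le_of_lt_of_mem_topTree hθ hsl hdc hx hxz)

theorem coversIn_topTree_iff (hθ : DynkinDatum θ) (hsl : SimplyLaced θ)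
    (hdc : GColoredDComplete θ κ) {x y : P} (hx : x ∈ TopTree κ) :
    CoversIn (TopTree κ) x y ↔ x ⋖ y := by
  refine ⟨fun ⟨_, _, hxy, hmin⟩ => ?_, fun hxy => ⟨hx, hxy.mem_topTree hθ hsl hdc hx, hxy.lt,
    fun z _ hxz hzy => hxy.2 hxz hzy⟩⟩
  obtain ⟨u, hxu, huy⟩ := exists_covBy_le_of_lt hxy
  rcases huy.eq_or_lt with rfl | huy
  · exact hxu
  · exact absurd huy (hmin u (hxu.mem_topTree hθ hsl hdc hx) hxu.lt)

theorem exists_forall_le_of_connectedPoset [Nonempty P] (hθ : DynkinDatum θ)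
    (hsl : SimplyLaced θ) (hdc : GColoredDComplete θ κ) (hconn : ConnectedPoset P) :
    ∃ r : P, ∀ z, z ≤ r := by
  obtain ⟨x, hx⟩ := (toFinite (univ : Set P)).exists_maximal univ_nonempty
  set S := {p : P | ∀ z, κ z = κ p → z ≤ x}
  have hxS : x ∈ S := fun z hz => (hdc.coloredEC z x hz).elim id (hx.2 trivial)
  have hadj : ∀ p q, p ∈ S → AdjColor θ (κ q) (κ p) → q ∈ S := by
    intro p q hp hqp z hz
    obtain ⟨t, ht, htp⟩ := exists_mem_topTree_color_eq (κ := κ) p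
    rcases hdc.coloredAC z t (by rwa [hz, htp]) with hzt | htz
    · exact hzt.trans (hp t htp)
    · exact ((isChain_Ici_of_mem_topTree hθ hsl hdc ht).total htz (hp t htp)).elim id
        (hx.2 trivial)
  have hS := hconn.eq_univ_of_covBy_closed hdc.1 ⟨x, hxS⟩ fun a b hab =>
    ⟨fun ha => hadj a b ha (hθ.adjColor_symm (hdc.coloredNA a b hab)),
      fun hb => hadj b a hb (hdc.coloredNA a b hab)⟩
  exact ⟨x, fun z => (hS ▸ mem_univ z : z ∈ S) z rfl⟩

theorem exists_topTree_neighbor_of_adjColor (hθ : DynkinDatum θ) (hsl : SimplyLaced θ)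
    (hdc : GColoredDComplete θ κ) {t z : P} (ht : t ∈ TopTree κ)
    (hz : AdjColor θ (κ z) (κ t)) :
    (∃ c ∈ TopTree κ, c ⋖ t ∧ κ c = κ z) ∨ ∃ u, t ⋖ u ∧ κ u = κ z := by
  obtain ⟨w, hw, hwz⟩ := exists_mem_topTree_color_eq (κ := κ) z
  have hadj : AdjColor θ (κ w) (κ t) := hwz ▸ hz
  have hne : w ≠ t := fun e => hθ.ne_of_adjColor hadj (congrArg κ e)
  rcases hdc.coloredAC w t hadj with h | h
  · exact Or.inl ⟨w, hw, covBy_of_lt_of_adjColor hθ hsl hdc hw (h.lt_of_ne hne)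
      (hθ.adjColor_symm hadj), hwz⟩
  · exact Or.inr ⟨w, covBy_of_lt_of_adjColor hθ hsl hdc ht (h.lt_of_ne hne.symm) hadj, hwz⟩

theorem mem_adjIoo_of_covBy (hθ : DynkinDatum θ) (hsl : SimplyLaced θ)
    (hdc : GColoredDComplete θ κ) {m t t' : P} (hm : m ∈ TopTree κ) (hmt : m ⋖ t)
    (ht' : IsColorPred κ t' t) : m ∈ adjIoo θ κ t' t := by
  have hadj : AdjColor θ (κ m) (κ t) := hdc.coloredNA m t hmt
  have hne : t' ≠ m := fun e => hθ.ne_of_adjColor hadj (e ▸ ht'.color_eq)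
  refine ⟨⟨?_, hmt.lt⟩, hadj⟩
  rcases hdc.coloredAC t' m (by rw [ht'.color_eq]; exact hθ.adjColor_symm hadj) with h | h
  · exact h.lt_of_ne hne
  · exact absurd (hmt.le_of_lt_of_mem_topTree hθ hsl hdc hm (h.lt_of_ne hne.symm)) ht'.lt.not_ge

end TopTreeStructure

section Branching

variable {α : Type*} [PartialOrder α] {S : Set α}

def IsBranchIn (S : Set α) (s : α) : Prop := {x | CoversIn S x s}.Nontrivial

theorem CoversIn.not_le_of_ne {a b s : α} (ha : CoversIn S a s) (hb : CoversIn S b s)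
    (hab : a ≠ b) : ¬ a ≤ b :=
  fun h => ha.2.2.2 b hb.1 (h.lt_of_ne hab) hb.2.2.1

theorem exists_coversIn_le (hS : S.Finite) {a b : α} (ha : a ∈ S) (hb : b ∈ S) (hab : a < b) :
    ∃ c, CoversIn S c b ∧ a ≤ c := by
  obtain ⟨c, hc⟩ := (hS.subset (sep_subset S fun c => a ≤ c ∧ c < b)).exists_maximal
    ⟨a, ha, le_rfl, hab⟩
  exact ⟨c, ⟨hc.1.1, hb, hc.1.2.2, fun z hz hcz hzb =>
    hcz.not_ge (hc.2 ⟨hz, hc.1.2.1.trans hcz.le, hzb⟩ hcz.le)⟩, hc.1.2.1⟩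

theorem exists_isBranchIn_between (hS : S.Finite) {a b v : α} (ha : a ∈ S) (hb : b ∈ S)
    (hv : v ∈ S) (hav : a ≤ v) (hbv : b ≤ v) (hab : ¬ a ≤ b) (hba : ¬ b ≤ a) :
    ∃ w, IsBranchIn S w ∧ a < w ∧ b < w ∧ w ≤ v := by
  have hv' : v ∈ {w ∈ S | a < w ∧ b < w ∧ w ≤ v} :=
    ⟨hv, hav.lt_of_ne (by rintro rfl; exact hba hbv),
      hbv.lt_of_ne (by rintro rfl; exact hab hav), le_rfl⟩
  obtain ⟨w, ⟨hwS, haw, hbw, hwv⟩, hmin⟩ := (hS.subset (sep_subset _ _)).exists_minimal ⟨v, hv'⟩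
  obtain ⟨c₁, hc₁, hac⟩ := exists_coversIn_le hS ha hwS haw
  obtain ⟨c₂, hc₂, hbc⟩ := exists_coversIn_le hS hb hwS hbw
  refine ⟨w, ⟨c₁, hc₁, c₂, hc₂, ?_⟩, haw, hbw, hwv⟩
  rintro rfl
  have hac' : a < c₁ := hac.lt_of_ne (by rintro rfl; exact hba hbc)
  have hbc' : b < c₁ := hbc.lt_of_ne (by rintro rfl; exact hab hac)
  exact hc₁.2.2.1.not_ge (hmin ⟨hc₁.1, hac', hbc', hc₁.2.2.1.le.trans hwv⟩ hc₁.2.2.1.le)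

def HasShapeY (S : Set α) : Prop :=
  ∃ (i j k : ℕ) (s : α) (C₁ C₂ : Set α),
    1 ≤ i ∧ 1 ≤ j ∧ j ≤ k ∧ s ∈ S ∧
    IsChain (· ≤ ·) {t ∈ S | s ≤ t} ∧
    ({t ∈ S | s ≤ t}).ncard = i ∧
    (∃ m₁ ∈ C₁, ∃ m₂ ∈ C₂, m₁ ≠ m₂ ∧
      {x : α | CoversIn S x s} = {m₁, m₂} ∧
      (∀ d ∈ C₁, d ≤ m₁) ∧ (∀ d ∈ C₂, d ≤ m₂)) ∧
    SaturatedChainIn S C₁ ∧ SaturatedChainIn S C₂ ∧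
    Disjoint C₁ C₂ ∧ C₁.ncard = j ∧ C₂.ncard = k ∧
    (∀ c₁ ∈ C₁, ∀ c₂ ∈ C₂, ¬(c₁ ≤ c₂ ∨ c₂ ≤ c₁)) ∧
    S = {t ∈ S | s ≤ t} ∪ C₁ ∪ C₂
theorem not_le_of_le_of_coversIn (hchain : ∀ x ∈ S, IsChain (· ≤ ·) {y ∈ S | x ≤ y})
    {s m m' a b : α} (hm : CoversIn S m s) (hm' : CoversIn S m' s) (hne : m ≠ m') (ha : a ∈ S)
    (ham : a ≤ m) (hbm' : b ≤ m') : ¬ a ≤ b := fun hab =>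
  ((hchain a ha).total ⟨hm.1, ham⟩ ⟨hm'.1, hab.trans hbm'⟩).elim (hm.not_le_of_ne hm' hne)
    (hm'.not_le_of_ne hm hne.symm)

theorem hasShapeY_of_coversIn_eq_pair (hS : S.Finite)
    (hchain : ∀ x ∈ S, IsChain (· ≤ ·) {y ∈ S | x ≤ y}) {s m₁ m₂ : α} (hs : s ∈ S)
    (hchildren : {x | CoversIn S x s} = {m₁, m₂}) (hne : m₁ ≠ m₂)
    (hcomp : ∀ t ∈ S, s ≤ t ∨ t ≤ s) (hbelow : ∀ w, IsBranchIn S w → ¬ w < s)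
    (hcard : {t ∈ S | t ≤ m₁}.ncard ≤ {t ∈ S | t ≤ m₂}.ncard) : HasShapeY S := by
  have hm₁ : CoversIn S m₁ s := (Set.ext_iff.1 hchildren m₁).2 (mem_insert _ _)
  have hm₂ : CoversIn S m₂ s := (Set.ext_iff.1 hchildren m₂).2 (mem_insert_of_mem _ rfl)
  have hsat : ∀ m, CoversIn S m s → SaturatedChainIn S {t ∈ S | t ≤ m} := by
    refine fun m hm => ⟨sep_subset _ _, fun a ha b hb _ => ?_,
      fun _ _ y hy z hz _ hzy => ⟨hz, hzy.le.trans hy.2⟩⟩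
    by_contra! h
    obtain ⟨w, hw, -, -, hwm⟩ := exists_isBranchIn_between hS ha.1 hb.1 hm.1 ha.2 hb.2 h.1 h.2
    exact hbelow w hw (hwm.trans_lt hm.2.2.1)
  have hcross : ∀ c₁ ∈ {t ∈ S | t ≤ m₁}, ∀ c₂ ∈ {t ∈ S | t ≤ m₂}, ¬(c₁ ≤ c₂ ∨ c₂ ≤ c₁) :=
    fun c₁ hc₁ c₂ hc₂ h => h.elim (not_le_of_le_of_coversIn hchain hm₁ hm₂ hne hc₁.1 hc₁.2 hc₂.2)
      (not_le_of_le_of_coversIn hchain hm₂ hm₁ hne.symm hc₂.1 hc₂.2 hc₁.2)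
  refine ⟨{t ∈ S | s ≤ t}.ncard, {t ∈ S | t ≤ m₁}.ncard, {t ∈ S | t ≤ m₂}.ncard, s,
    {t ∈ S | t ≤ m₁}, {t ∈ S | t ≤ m₂},
    (ncard_pos (hS.subset (sep_subset _ _))).2 ⟨s, hs, le_rfl⟩,
    (ncard_pos (hS.subset (sep_subset _ _))).2 ⟨m₁, hm₁.1, le_rfl⟩, hcard, hs,
    (hchain s hs), rfl, ⟨m₁, ⟨hm₁.1, le_rfl⟩, m₂, ⟨hm₂.1, le_rfl⟩, hne, hchildren,
      fun _ hd => hd.2, fun _ hd => hd.2⟩, hsat m₁ hm₁, hsat m₂ hm₂,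
    disjoint_left.2 fun a ha hb => hcross a ha a hb (Or.inl le_rfl), rfl, rfl, hcross, ?_⟩
  refine Subset.antisymm (fun t ht => ?_) fun t ht => ht.elim (fun h => h.elim (·.1) (·.1)) (·.1)
  rcases hcomp t ht with hst | hts
  · exact Or.inl (Or.inl ⟨ht, hst⟩)
  rcases hts.eq_or_lt with rfl | hts
  · exact Or.inl (Or.inl ⟨ht, le_rfl⟩)
  obtain ⟨c, hc, htc⟩ := exists_coversIn_le hS ht hs hts
  rcases (hchildren ▸ hc : c ∈ ({m₁, m₂} : Set α)) with rfl | rfl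
  · exact Or.inl (Or.inr ⟨ht, htc⟩)
  · exact Or.inr ⟨ht, htc⟩

theorem IsBranchIn.hasShapeY (hS : S.Finite) (hchain : ∀ x ∈ S, IsChain (· ≤ ·) {y ∈ S | x ≤ y})
    {r : α} (hr : r ∈ S) (hle : ∀ x ∈ S, x ≤ r) (htwo : ∀ w, {x | CoversIn S x w}.ncard ≤ 2)
    (hbranch : ∀ v w, IsBranchIn S v → IsBranchIn S w → ¬ w < v) {s : α}
    (hs : IsBranchIn S s) : HasShapeY S := by
  obtain ⟨m₁, hm₁, m₂, hm₂, hne⟩ := id hs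
  have hsS : s ∈ S := hm₁.2.1
  have hchildren : {x | CoversIn S x s} = {m₁, m₂} :=
    (eq_of_subset_of_ncard_le (pair_subset hm₁ hm₂) ((htwo s).trans (ncard_pair hne).ge)
      (hS.subset fun _ hx => hx.1)).symm
  have hcomp : ∀ t ∈ S, s ≤ t ∨ t ≤ s := by
    intro t ht
    by_contra! h
    obtain ⟨w, hw, hsw, -, -⟩ :=
      exists_isBranchIn_between hS hsS ht hr (hle s hsS) (hle t ht) h.1 h.2
    exact hbranch w s hw hs hsw
  have hbelow : ∀ w, IsBranchIn S w → ¬ w < s := fun w hw => hbranch s w hs hw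
  rcases le_total {t ∈ S | t ≤ m₁}.ncard {t ∈ S | t ≤ m₂}.ncard with h | h
  · exact hasShapeY_of_coversIn_eq_pair hS hchain hsS hchildren hne hcomp hbelow h
  · exact hasShapeY_of_coversIn_eq_pair hS hchain hsS (hchildren.trans (pair_comm _ _))
      hne.symm hcomp hbelow h

end Branching

section TopTreeBranching

variable [PartialOrder P] [Finite P] {θ : Γ → Γ → ℤ} {κ : P → Γ}

theorem exists_isColorPred_of_coversIn (hec : ColoredEC κ) (hsi : SlantIrreducible κ)
    {m t : P} (h : CoversIn (TopTree κ) m t) : ∃ t', IsColorPred κ t' t := by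
  obtain ⟨z, hzt, hz⟩ := hsi.2 m t h
  exact hec.exists_isColorPred hz ((hec.le_of_mem_topTree h.2.1 hz).lt_of_ne hzt)

theorem ncard_coversIn_topTree_le_two (hθ : DynkinDatum θ) (hsl : SimplyLaced θ)
    (hdc : GColoredDComplete θ κ) (hsi : SlantIrreducible κ) (t : P) :
    {x | CoversIn (TopTree κ) x t}.ncard ≤ 2 := by
  rcases eq_empty_or_nonempty {x | CoversIn (TopTree κ) x t} with h | ⟨m, hm⟩
  · simp [h]
  obtain ⟨t', ht'⟩ := exists_isColorPred_of_coversIn hdc.coloredEC hsi hm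
  calc {x | CoversIn (TopTree κ) x t}.ncard ≤ (adjIoo θ κ t' t).ncard :=
        ncard_le_ncard (fun x hx => mem_adjIoo_of_covBy hθ hsl hdc hx.1
          ((coversIn_topTree_iff hθ hsl hdc hx.1).1 hx) ht') (toFinite _)
    _ = 2 := ht'.ncard_adjIoo hsl hdc.coloredICE2

theorem IsColorPred.lt_of_mem_adjIoo (hθ : DynkinDatum θ) (hsl : SimplyLaced θ)
    (hdc : GColoredDComplete θ κ) {t u t' u' y : P} (ht : t ∈ TopTree κ) (htu : t ⋖ u)
    (ht' : IsColorPred κ t' t) (hu' : IsColorPred κ u' u) (hy : y ∈ adjIoo θ κ u' u)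
    (hyt : κ y ≠ κ t) : t' < u' := by
  have hadj : AdjColor θ (κ t') (κ u') := by
    rw [ht'.color_eq, hu'.color_eq]; exact hdc.coloredNA t u htu
  have hne : t' ≠ u' := fun e => hθ.ne_of_adjColor hadj (congrArg κ e)
  rcases hdc.coloredAC t' u' hadj with h | h
  · exact h.lt_of_ne hne
  -- otherwise `t'` would be a third element of `adjIoo θ κ u' u`, besides `t` and `y`
  have ht'mem : t' ∈ adjIoo θ κ u' u :=
    ⟨⟨h.lt_of_ne hne.symm, ht'.lt.trans htu.lt⟩, hu'.color_eq ▸ hadj⟩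
  rcases hu'.eq_or_eq_of_mem_adjIoo hsl hdc.coloredICE2 (mem_adjIoo_of_covBy hθ hsl hdc ht htu hu')
    hy ht'mem (fun e => hyt (e ▸ rfl)) with e | e
  · exact absurd (e ▸ ht'.lt) (lt_irrefl t)
  · exact absurd (e ▸ ht'.color_eq) hyt

theorem colorPred_lt_colorPred_of_lt_isBranchIn (hθ : DynkinDatum θ) (hsl : SimplyLaced θ)
    (hdc : GColoredDComplete θ κ) (hsi : SlantIrreducible κ) {s : P}
    (hs : IsBranchIn (TopTree κ) s) :
    ∀ t ∈ TopTree κ, t < s → ∀ {u t' u'}, t ⋖ u → IsColorPred κ t' t → IsColorPred κ u' u →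
      t' < u' := by
  intro t
  induction t using WellFoundedGT.induction with
  | _ t ih =>
  intro ht hts u t' u' htu ht' hu'
  have huT := htu.mem_topTree hθ hsl hdc ht
  suffices ∃ y ∈ adjIoo θ κ u' u, κ y ≠ κ t from
    let ⟨y, hy, hyt⟩ := this; ht'.lt_of_mem_adjIoo hθ hsl hdc ht htu hu' hy hyt
  rcases (htu.le_of_lt_of_mem_topTree hθ hsl hdc ht hts).eq_or_lt with rfl | hus
  · obtain ⟨c, hc, hct⟩ : ∃ c, CoversIn (TopTree κ) c u ∧ c ≠ t := by
      obtain ⟨c₁, hc₁, c₂, hc₂, hc⟩ := hs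
      by_cases h : c₁ = t
      · exact ⟨c₂, hc₂, fun e => hc (h.trans e.symm)⟩
      · exact ⟨c₁, hc₁, h⟩
    exact ⟨c, mem_adjIoo_of_covBy hθ hsl hdc hc.1 ((coversIn_topTree_iff hθ hsl hdc hc.1).1 hc) hu',
      fun e => hct (hdc.coloredEC.eq_of_mem_topTree hc.1 ht e)⟩
  · obtain ⟨v, huv, -⟩ := exists_covBy_le_of_lt hus
    have hvT := huv.mem_topTree hθ hsl hdc huT
    obtain ⟨v', hv'⟩ := exists_isColorPred_of_coversIn hdc.coloredEC hsi
      ((coversIn_topTree_iff hθ hsl hdc huT).2 huv)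
    refine ⟨v', ⟨⟨ih u htu.lt huT hus huv hu' hv',
      (mem_adjIoo_of_covBy hθ hsl hdc huT huv hv').1.1⟩, ?_⟩, ?_⟩
    · rw [hv'.color_eq]; exact hθ.adjColor_symm (hdc.coloredNA u v huv)
    · rw [hv'.color_eq]
      exact fun e => (htu.lt.trans huv.lt).ne' (hdc.coloredEC.eq_of_mem_topTree hvT ht e)

theorem not_lt_of_isBranchIn_topTree (hθ : DynkinDatum θ) (hsl : SimplyLaced θ)
    (hdc : GColoredDComplete θ κ) (hsi : SlantIrreducible κ) {s w : P}
    (hs : IsBranchIn (TopTree κ) s) (hw : IsBranchIn (TopTree κ) w) : ¬ w < s := by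
  intro hws
  obtain ⟨d₁, hd₁, d₂, hd₂, hd⟩ := hw
  have hwT : w ∈ TopTree κ := hd₁.2.1
  obtain ⟨u, hwu, -⟩ := exists_covBy_le_of_lt hws
  obtain ⟨w', hw'⟩ := exists_isColorPred_of_coversIn hdc.coloredEC hsi hd₁
  obtain ⟨u', hu'⟩ := exists_isColorPred_of_coversIn hdc.coloredEC hsi
    ((coversIn_topTree_iff hθ hsl hdc hwT).2 hwu)
  have hu'mem : u' ∈ adjIoo θ κ w' w :=
    ⟨⟨colorPred_lt_colorPred_of_lt_isBranchIn hθ hsl hdc hsi hs w hwT hws hwu hw' hu',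
      (mem_adjIoo_of_covBy hθ hsl hdc hwT hwu hu').1.1⟩,
      by rw [hu'.color_eq]; exact hθ.adjColor_symm (hdc.coloredNA w u hwu)⟩
  have hmem : ∀ d, CoversIn (TopTree κ) d w → d ∈ adjIoo θ κ w' w := fun d hd =>
    mem_adjIoo_of_covBy hθ hsl hdc hd.1 ((coversIn_topTree_iff hθ hsl hdc hd.1).1 hd) hw'
  -- `u'` is a third element of the interval below `w`, besides its two children
  rcases hw'.eq_or_eq_of_mem_adjIoo hsl hdc.coloredICE2 (hmem d₁ hd₁) (hmem d₂ hd₂) hu'mem hd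
    with e | e
  · exact hu'.notMem_topTree (e ▸ hd₁.1)
  · exact hu'.notMem_topTree (e ▸ hd₂.1)

theorem exists_colorPred_gt_of_forall_not_isBranchIn (hθ : DynkinDatum θ) (hsl : SimplyLaced θ)
    (hdc : GColoredDComplete θ κ) (hno : ∀ s, ¬ IsBranchIn (TopTree κ) s) :
    ∀ t ∈ TopTree κ, ∀ {u u'}, t ⋖ u → IsColorPred κ u' u →
      ∃ t', IsColorPred κ t' t ∧ u' < t' := by
  intro t
  induction t using WellFoundedGT.induction with
  | _ t ih =>
  intro ht u u' htu hu'
  have huT := htu.mem_topTree hθ hsl hdc ht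
  obtain ⟨z, hz, hzt⟩ := exists_ne_of_one_lt_ncard
    (by rw [hu'.ncard_adjIoo hsl hdc.coloredICE2]; norm_num) t
  rcases exists_topTree_neighbor_of_adjColor hθ hsl hdc huT hz.2 with
    ⟨c, hc, hcu, hcz⟩ | ⟨v, huv, hvz⟩
  · have hct : c = t := not_nontrivial_iff.1 (hno u)
      ((coversIn_topTree_iff hθ hsl hdc hc).2 hcu) ((coversIn_topTree_iff hθ hsl hdc ht).2 htu)
    have hzκ : κ z = κ t := hct ▸ hcz.symm
    have hz_lt : z < t := (hdc.coloredEC.le_of_mem_topTree ht hzκ).lt_of_ne hzt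
    obtain ⟨t', ht'⟩ := hdc.coloredEC.exists_isColorPred hzκ hz_lt
    exact ⟨t', ht', hz.1.1.trans_le (ht'.le_of_lt z hzκ hz_lt)⟩
  · have hzv : z < v := hz.1.2.trans huv.lt
    obtain ⟨v', hv'⟩ := hdc.coloredEC.exists_isColorPred hvz.symm hzv
    obtain ⟨u'', hu'', hlt⟩ := ih u htu.lt huT huv hv'
    rw [hu''.unique hu'] at hlt
    exact absurd ((hv'.le_of_lt z hvz.symm hzv).trans_lt hlt) hz.1.1.not_gt

theorem exists_isBranchIn_topTree (hθ : DynkinDatum θ) (hsl : SimplyLaced θ)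
    (hdc : GColoredDComplete θ κ) (hsi : SlantIrreducible κ) {r : P} (hr : ∀ z, z ≤ r)
    (hnt : (TopTree κ).Nontrivial) : ∃ s, IsBranchIn (TopTree κ) s := by
  by_contra! hno
  obtain ⟨m, hm⟩ := (toFinite (TopTree κ)).exists_minimal hnt.nonempty
  have hmr : m < r := by
    refine (hr m).lt_of_ne fun hmr => ?_
    have hsub : ∀ x ∈ TopTree κ, x = m := fun x hx =>
      le_antisymm (hmr ▸ hr x) (hm.2 hx (hmr ▸ hr x))
    obtain ⟨x, hx, y, hy, hxy⟩ := hnt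
    exact hxy ((hsub x hx).trans (hsub y hy).symm)
  obtain ⟨u, hmu, -⟩ := exists_covBy_le_of_lt hmr
  obtain ⟨u', hu'⟩ := exists_isColorPred_of_coversIn hdc.coloredEC hsi
    ((coversIn_topTree_iff hθ hsl hdc hm.1).2 hmu)
  obtain ⟨m', hm', hlt⟩ :=
    exists_colorPred_gt_of_forall_not_isBranchIn hθ hsl hdc hno m hm.1 hmu hu'
  obtain ⟨z, hz⟩ : (adjIoo θ κ m' m).Nonempty :=
    nonempty_of_ncard_ne_zero (by rw [hm'.ncard_adjIoo hsl hdc.coloredICE2]; norm_num)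
  -- the color of `z` can belong neither to a child of the minimal `m` nor to its parent `u`
  rcases exists_topTree_neighbor_of_adjColor hθ hsl hdc hm.1 hz.2 with
    ⟨c, hc, hcm, -⟩ | ⟨v, hmv, hvz⟩
  · exact hcm.lt.not_ge (hm.2 hc hcm.lt.le)
  · have hvu : v = u := le_antisymm (hmv.le_of_lt_of_mem_topTree hθ hsl hdc hm.1 hmu.lt)
      (hmu.le_of_lt_of_mem_topTree hθ hsl hdc hm.1 hmv.lt)
    have hzκ : κ z = κ u := hvu ▸ hvz.symm
    exact (hu'.le_of_lt z hzκ (hz.1.2.trans hmu.lt)).not_gt (hlt.trans hz.1.1)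

end TopTreeBranching

theorem topTree_shape_Y_general [PartialOrder P] [Fintype P] [Nonempty P]
    (θ : Γ → Γ → ℤ) (κ : P → Γ) (hθ : DynkinDatum θ) (hsl : SimplyLaced θ)
    (hdc : GColoredDComplete θ κ) (hsi : SlantIrreducible κ)
    (hnt : (TopTree κ).Nontrivial) :
    ∃ (i j k : ℕ) (s : P) (C₁ C₂ : Set P),
      1 ≤ i ∧ 1 ≤ j ∧ j ≤ k ∧ s ∈ TopTree κ ∧
      IsChain (· ≤ ·) {t ∈ TopTree κ | s ≤ t} ∧
      ({t ∈ TopTree κ | s ≤ t}).ncard = i ∧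
      (∃ m₁ ∈ C₁, ∃ m₂ ∈ C₂, m₁ ≠ m₂ ∧
        {x : P | CoversIn (TopTree κ) x s} = {m₁, m₂} ∧
        (∀ d ∈ C₁, d ≤ m₁) ∧ (∀ d ∈ C₂, d ≤ m₂)) ∧
      SaturatedChainIn (TopTree κ) C₁ ∧ SaturatedChainIn (TopTree κ) C₂ ∧
      Disjoint C₁ C₂ ∧ C₁.ncard = j ∧ C₂.ncard = k ∧
      (∀ c₁ ∈ C₁, ∀ c₂ ∈ C₂, ¬(c₁ ≤ c₂ ∨ c₂ ≤ c₁)) ∧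
      TopTree κ = {t ∈ TopTree κ | s ≤ t} ∪ C₁ ∪ C₂ := by
  obtain ⟨r, hr⟩ := exists_forall_le_of_connectedPoset hθ hsl hdc hsi.1
  obtain ⟨s, hs⟩ := exists_isBranchIn_topTree hθ hsl hdc hsi hr hnt
  exact hs.hasShapeY (toFinite _)
    (fun x hx => (isChain_Ici_of_mem_topTree hθ hsl hdc hx).mono fun _ hy => hy.2)
    (mem_topTree_of_forall_le fun z _ => hr z) (fun x _ => hr x)
    (ncard_coversIn_topTree_le_two hθ hsl hdc hsi)
    (fun _ _ hv hw => not_lt_of_isBranchIn_topTree hθ hsl hdc hsi hv hw)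

/-- The top tree of a slant irreducible finite Γ-colored d-complete
poset with Γ simply laced and more than one element has shape Y(i;j,k) for some
i ≥ 1 and k ≥ j ≥ 1. -/
theorem topTree_shape_Y [Fintype Γ] [PartialOrder P] [Fintype P] [Nonempty P]
    (θ : Γ → Γ → ℤ) (κ : P → Γ) (hθ : DynkinDatum θ) (hsl : SimplyLaced θ)
    (hdc : GColoredDComplete θ κ) (hsi : SlantIrreducible κ)
    (hnt : (TopTree κ).Nontrivial) :
    ∃ (i j k : ℕ) (s : P) (C₁ C₂ : Set P),
      1 ≤ i ∧ 1 ≤ j ∧ j ≤ k ∧ s ∈ TopTree κ ∧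
      IsChain (· ≤ ·) {t ∈ TopTree κ | s ≤ t} ∧
      ({t ∈ TopTree κ | s ≤ t}).ncard = i ∧
      (∃ m₁ ∈ C₁, ∃ m₂ ∈ C₂, m₁ ≠ m₂ ∧
        {x : P | CoversIn (TopTree κ) x s} = {m₁, m₂} ∧
        (∀ d ∈ C₁, d ≤ m₁) ∧ (∀ d ∈ C₂, d ≤ m₂)) ∧
      SaturatedChainIn (TopTree κ) C₁ ∧ SaturatedChainIn (TopTree κ) C₂ ∧
      Disjoint C₁ C₂ ∧ C₁.ncard = j ∧ C₂.ncard = k ∧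
      (∀ c₁ ∈ C₁, ∀ c₂ ∈ C₂, ¬(c₁ ≤ c₂ ∨ c₂ ≤ c₁)) ∧
      TopTree κ = {t ∈ TopTree κ | s ≤ t} ∪ C₁ ∪ C₂ :=
  topTree_shape_Y_general θ κ hθ hsl hdc hsi hnt
end

section
/- Let P be a connected finite Γ-colored d-complete poset and suppose there exist adjacent colors b, c ∈ Γ with L_b(P) = L_c(P) = 2. Then P is not an order filter of any Γ-colored minuscule poset; i.e., there is no Γ-colored minuscule poset Q (with coloring κ_Q : Q → Γ) such that P is an order filter of Q and κ_Q restricted to P equals κ. -/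
/-!
Common definitions: Dynkin diagram data, Γ-colored posets, and the coloring
properties EC, NA, AC, ICE2, UCB1, LCB1 from the paper, together with
Γ-colored d-complete and Γ-colored minuscule posets, top trees, slant
irreducibility, extensions, lower frontier censuses, and full heaps.
-/

universe u v w

variable {Γ : Type u} {P : Type v}

/-!
Let `ι : P → Q` realize `P` as an order filter of a minuscule poset `Q`, and let `y` be the
minimum of `P_b`. The elements of `ι '' L(y, P)` already give `ι y` a lower census of `2`
in `Q`, so by (LCB1) `ι y` is not minimal in `Q_b`, and it has a predecessor `x_b` of color
`b`, which lies outside the filter. Likewise for `c`. By (AC), `x_b` and `x_c` are comparable;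
say `x_b < x_c`. Then the interval `(x_b, ι y)` contains both `ι '' L(y, P)` and `x_c`, so its
census for the color `b` exceeds `2`, contradicting (ICE2).
-/

open Set

theorem finsum_mem_le_finsum_mem_of_subset {α M : Type*} [AddCommMonoid M] [PartialOrder M]
    [IsOrderedAddMonoid M] {f : α → M} {s t : Set α} (hst : s ⊆ t) (ht : t.Finite)
    (hf : ∀ i ∈ t \ s, 0 ≤ f i) : ∑ᶠ i ∈ s, f i ≤ ∑ᶠ i ∈ t, f i := by
  rw [← finsum_mem_add_sdiff hst ht]
  exact le_add_of_nonneg_right (finsum_nonneg fun i => finsum_nonneg fun hi => hf i hi)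

section Dynkin

variable {Γ : Type*} {θ : Γ → Γ → ℤ} {a b : Γ}

theorem DynkinDatum.neg_nonneg_of_ne (hθ : DynkinDatum θ) (h : a ≠ b) : 0 ≤ -θ a b := by
  linarith [hθ.2.1 a b h]

theorem AdjColor.ne (hθ : DynkinDatum θ) (h : AdjColor θ a b) : a ≠ b := by
  rintro rfl
  exact absurd (hθ.1 a) (ne_of_lt (lt_trans h two_pos))

theorem AdjColor.symm (hθ : DynkinDatum θ) (h : AdjColor θ a b) : AdjColor θ b a :=
  lt_of_le_of_ne (hθ.2.1 b a (h.ne hθ).symm)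
    fun h0 => ne_of_lt h ((hθ.2.2 a b (h.ne hθ)).2 h0)

end Dynkin

section ColoredPoset

variable {Γ Q : Type*} [PartialOrder Q] {θ : Γ → Γ → ℤ} {κ : Q → Γ} {v : Q}

theorem exists_lt_of_two_le_census (hLCB : ColoredLCB1 θ κ) {S : Set Q}
    (hS : S ⊆ LSet θ κ v) (h2 : 2 ≤ ∑ᶠ s ∈ S, -θ (κ s) (κ v)) :
    ∃ x, κ x = κ v ∧ x < v := by
  by_contra! hmin
  obtain ⟨hfin, hle⟩ := hLCB v hmin
  have : ∑ᶠ s ∈ S, -θ (κ s) (κ v) ≤ ∑ᶠ s ∈ LSet θ κ v, -θ (κ s) (κ v) :=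
    finsum_mem_le_finsum_mem_of_subset hS hfin fun s hs => (neg_pos.2 hs.1.2).le
  omega

theorem exists_consecutive_of_lt (hlf : LocallyFinitePoset Q) {x : Q}
    (hx : κ x = κ v) (hxv : x < v) :
    ∃ m, κ m = κ v ∧ m < v ∧ ∀ z ∈ Ioo m v, κ z ≠ κ v := by
  obtain ⟨m, ⟨hxm, hm, hmv⟩, hmax⟩ := ((hlf x v).subset
    fun z (hz : x ≤ z ∧ κ z = κ v ∧ z < v) => ⟨hz.1, hz.2.2.le⟩).exists_maximal
    ⟨x, le_rfl, hx, hxv⟩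
  refine ⟨m, hm, hmv, fun z ⟨hmz, hzv⟩ hz => hmz.not_ge ?_⟩
  exact hmax ⟨hxm.trans hmz.le, hz, hzv⟩ hmz.le

theorem not_adjColor_of_consecutive (hθ : DynkinDatum θ) (hlf : LocallyFinitePoset Q)
    (hAC : ColoredAC θ κ) (hICE : ColoredICE2 θ κ) {R S : Set Q} (hR : IsUpperSet R)
    (hv : v ∈ R) (hSR : S ⊆ R) (hS : S ⊆ LSet θ κ v) (h2 : ∑ᶠ s ∈ S, -θ (κ s) (κ v) = 2)
    {x : Q} (hx : κ x = κ v) (hxv : x < v) (hcons : ∀ z ∈ Ioo x v, κ z ≠ κ v) (hxR : x ∉ R)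
    {w : Q} (hxw : x < w) (hwR : w ∉ R) : ¬AdjColor θ (κ w) (κ v) := by
  intro hwv
  have hfin : (Ioo x v).Finite := (hlf x v).subset Ioo_subset_Icc_self
  have hSI : S ⊆ Ioo x v := fun s hs => by
    have hxs : x ≤ s := (hAC s x (hx ▸ (hS hs).2)).resolve_left fun h => hxR (hR h (hSR hs))
    exact ⟨hxs.lt_of_ne fun h => hxR (h ▸ hSR hs), (hS hs).1⟩
  have hwI : w ∈ Ioo x v := by
    have hwv' : w ≤ v := (hAC w v hwv).resolve_right fun h => hwR (hR h hv)
    exact ⟨hxw, hwv'.lt_of_ne fun h => hwR (h ▸ hv)⟩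
  have hwS : w ∉ S := fun h => hwR (hSR h)
  have hsum : -θ (κ w) (κ v) + 2 ≤ 2 := by
    calc -θ (κ w) (κ v) + 2 = ∑ᶠ z ∈ insert w S, -θ (κ z) (κ v) := by
          rw [finsum_mem_insert _ hwS (hfin.subset hSI), h2]
      _ ≤ ∑ᶠ z ∈ Ioo x v, -θ (κ z) (κ v) :=
          finsum_mem_le_finsum_mem_of_subset (insert_subset hwI hSI) hfin
            fun z hz => hθ.neg_nonneg_of_ne (hcons z hz.1)
      _ = 2 := hICE _ x v hx rfl hxv hcons
  exact absurd hwv (by unfold AdjColor; omega)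

end ColoredPoset

namespace FilterEmbedding

variable {Γ P Q : Type*} [PartialOrder P] [PartialOrder Q] {θ : Γ → Γ → ℤ} {κ : P → Γ}
  {κQ : Q → Γ} {ι : P → Q}

theorem injective (hι : FilterEmbedding κ κQ ι) : Function.Injective ι := fun p q h =>
  le_antisymm ((hι.1 p q).1 h.le) ((hι.1 q p).1 h.ge)

theorem image_LSet_subset (hι : FilterEmbedding κ κQ ι) (y : P) :
    ι '' LSet θ κ y ⊆ LSet θ κQ (ι y) := by
  rintro _ ⟨x, ⟨hxy, hadj⟩, rfl⟩
  refine ⟨lt_of_le_of_ne ((hι.1 x y).2 hxy.le) (hι.injective.ne hxy.ne), ?_⟩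
  rwa [hι.2.1, hι.2.1]

theorem finsum_image_LSet (hι : FilterEmbedding κ κQ ι) (y : P) :
    ∑ᶠ x ∈ ι '' LSet θ κ y, -θ (κQ x) (κQ (ι y)) = LCensus θ κ y := by
  rw [finsum_mem_image hι.injective.injOn]
  simp only [hι.2.1, LCensus]

theorem notMem_range_of_lt_of_minimal (hι : FilterEmbedding κ κQ ι) {y : P}
    (hmin : ∀ z, κ z = κ y → y ≤ z) {x : Q} (hx : κQ x = κ y) (hxy : x < ι y) :
    x ∉ range ι := by
  rintro ⟨z, rfl⟩
  have hzy : z ≤ y := (hι.1 z y).1 hxy.le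
  exact hxy.ne (congrArg ι (hzy.antisymm (hmin z (by rw [← hι.2.1, hx]))))

theorem exists_consecutive_notMem_range (hι : FilterEmbedding κ κQ ι)
    (hQ : GColoredMinuscule θ κQ) {y : P} (hmin : ∀ z, κ z = κ y → y ≤ z)
    (h2 : LCensus θ κ y = 2) :
    ∃ x, κQ x = κ y ∧ x < ι y ∧ (∀ z ∈ Ioo x (ι y), κQ z ≠ κ y) ∧ x ∉ range ι := by
  obtain ⟨⟨hlf, -⟩, hLCB⟩ := hQ
  obtain ⟨x₀, hx₀, hx₀y⟩ :=
    exists_lt_of_two_le_census hLCB (hι.image_LSet_subset y) (hι.finsum_image_LSet y ▸ h2.ge)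
  obtain ⟨x, hx, hxy, hcons⟩ := exists_consecutive_of_lt hlf hx₀ hx₀y
  rw [hι.2.1] at hx hcons
  exact ⟨x, hx, hxy, hcons, hι.notMem_range_of_lt_of_minimal hmin hx hxy⟩

theorem not_adjColor_of_consecutive (hι : FilterEmbedding κ κQ ι) (hθ : DynkinDatum θ)
    (hQ : GColoredMinuscule θ κQ) {y : P} (h2 : LCensus θ κ y = 2) {x : Q}
    (hx : κQ x = κ y) (hxy : x < ι y) (hcons : ∀ z ∈ Ioo x (ι y), κQ z ≠ κ y)
    (hxR : x ∉ range ι) {w : Q} (hxw : x < w) (hwR : w ∉ range ι) :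
    ¬AdjColor θ (κQ w) (κ y) := by
  obtain ⟨⟨hlf, -, -, -, hAC, hICE, -⟩, -⟩ := hQ
  rw [← hι.2.1] at hx hcons ⊢
  exact _root_.not_adjColor_of_consecutive hθ hlf hAC hICE hι.2.2 (mem_range_self y)
    (image_subset_range ι _) (hι.image_LSet_subset y) (hι.finsum_image_LSet y ▸ h2)
    hx hxy hcons hxR hxw hwR

end FilterEmbedding

theorem adjacent_censuses_two_not_filter_general [PartialOrder P]
    (θ : Γ → Γ → ℤ) (κ : P → Γ) (hθ : DynkinDatum θ)
    (b c : Γ) (hadj : AdjColor θ b c)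
    (yb : P) (hyb : κ yb = b) (hybmin : ∀ z : P, κ z = b → yb ≤ z)
    (yc : P) (hyc : κ yc = c) (hycmin : ∀ z : P, κ z = c → yc ≤ z)
    (hLb : LCensus θ κ yb = 2) (hLc : LCensus θ κ yc = 2) :
    ¬∃ (Q : Type w) (instQ : PartialOrder Q) (κQ : Q → Γ) (ι : P → Q),
        @GColoredMinuscule Γ Q instQ θ κQ ∧
          @FilterEmbedding Γ P Q inferInstance instQ κ κQ ι := by
  rintro ⟨Q, instQ, κQ, ι, hQ, hι⟩
  subst hyb hyc
  obtain ⟨xb, hxb, hxbyb, hbcons, hxbR⟩ :=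
    hι.exists_consecutive_notMem_range hQ hybmin hLb
  obtain ⟨xc, hxc, hxcyc, hccons, hxcR⟩ :=
    hι.exists_consecutive_notMem_range hQ hycmin hLc
  have hne : xb ≠ xc := fun h => hadj.ne hθ (hxb ▸ hxc ▸ congrArg κQ h)
  have hAC : ColoredAC θ κQ := hQ.1.2.2.2.2.1
  rcases hAC xb xc (hxb ▸ hxc ▸ hadj) with h | h
  · exact hι.not_adjColor_of_consecutive hθ hQ hLb hxb hxbyb hbcons hxbR
      (h.lt_of_ne hne) hxcR (hxc ▸ hadj.symm hθ)
  · exact hι.not_adjColor_of_consecutive hθ hQ hLc hxc hxcyc hccons hxcR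
      (h.lt_of_ne hne.symm) hxbR (hxb ▸ hadj)

/-- A connected finite Γ-colored d-complete poset with lower frontier
censuses equal to 2 at two adjacent colors is not an order filter of any Γ-colored
minuscule poset. -/
theorem adjacent_censuses_two_not_filter [Fintype Γ] [PartialOrder P] [Fintype P]
    [Nonempty P]
    (θ : Γ → Γ → ℤ) (κ : P → Γ) (hθ : DynkinDatum θ)
    (hdc : GColoredDComplete θ κ) (hconn : ConnectedPoset P)
    (b c : Γ) (hadj : AdjColor θ b c)
    (yb : P) (hyb : κ yb = b) (hybmin : ∀ z : P, κ z = b → yb ≤ z)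
    (yc : P) (hyc : κ yc = c) (hycmin : ∀ z : P, κ z = c → yc ≤ z)
    (hLb : LCensus θ κ yb = 2) (hLc : LCensus θ κ yc = 2) :
    ¬∃ (Q : Type w) (instQ : PartialOrder Q) (κQ : Q → Γ) (ι : P → Q),
        @GColoredMinuscule Γ Q instQ θ κQ ∧
          @FilterEmbedding Γ P Q inferInstance instQ κ κQ ι :=
  adjacent_censuses_two_not_filter_general θ κ hθ b c hadj yb hyb hybmin yc hyc hycmin hLb hLc
end
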